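/- arXiv:2301.09951 — 2 statements merged into one kernel-verified Lean document; each statement's English description precedes it below -/
import Mathlib

section
/- Let R² = v/(v+σ²) where σ² > 0 is fixed. Then R² ~ Beta(a,b) if and only if v ~ GBP(a,b,1,σ²). -/
open MeasureTheory ProbabilityTheory Real Filter Finset

noncomputable section

/-- Gamma density with shape `a` and rate `r`. -/
def gammaPdf (a r x : ℝ) : ℝ :=
  if 0 < x then r ^ a / Real.Gamma a * x ^ (a - 1) * Real.exp (-(r * x)) else 0

/-- Beta function. -/
def betaFn (a b : ℝ) : ℝ := Real.Gamma a * Real.Gamma b / Real.Gamma (a + b)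

/-- Beta prime density. -/
def betaPrimePdf (a b x : ℝ) : ℝ :=
  if 0 < x then x ^ (a - 1) * (1 + x) ^ (-(a + b)) / betaFn a b else 0

/-- Generalized beta prime density. -/
def gbpPdf (a b c d x : ℝ) : ℝ :=
  if 0 ≤ x then c * (x / d) ^ (a * c - 1) * (1 + (x / d) ^ c) ^ (-(a + b)) / (d * betaFn a b)
  else 0

/-- Beta density. -/
def betaPdf (a b x : ℝ) : ℝ :=
  if 0 < x ∧ x < 1 then x ^ (a - 1) * (1 - x) ^ (b - 1) / betaFn a b else 0

/-- The measure on ℝ with Lebesgue density `f`. -/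
def pdfMeasure (f : ℝ → ℝ) : Measure ℝ :=
  MeasureTheory.volume.withDensity fun x => ENNReal.ofReal (f x)

/-! The map `x ↦ x / (x + σ²)` sends `(0, ∞)` bijectively onto `(0, 1)`, with derivative
`σ² / (x + σ²)²` and left inverse `y ↦ σ² y / (1 - y)`. By the one-dimensional change of
variables, `σ² / (x + σ²)² · Beta(a, b)(x / (x + σ²))` is exactly the GBP(a, b, 1, σ²) density, so
the map pushes GBP forward to Beta. Conversely, pushing forward along the map is injective on laws
carried by `(0, ∞)`, and both the law of `v` and GBP are. -/

theorem map_restrict_withDensity_abs_deriv_mul {s : Set ℝ} {f f' : ℝ → ℝ} (hs : MeasurableSet s)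
    (hfm : Measurable f) (hf' : ∀ x ∈ s, HasDerivWithinAt f (f' x) s x) (hf : Set.InjOn f s)
    (g : ℝ → ENNReal) :
    Measure.map f ((volume.restrict s).withDensity fun x => ENNReal.ofReal |f' x| * g (f x)) =
      (volume.restrict (f '' s)).withDensity g := by
  ext t ht
  have hft : MeasurableSet (f ⁻¹' t ∩ s) := (hfm ht).inter hs
  rw [Measure.map_apply hfm ht, withDensity_apply _ (hfm ht), withDensity_apply _ ht,
    Measure.restrict_restrict (hfm ht), Measure.restrict_restrict ht, ← Set.image_preimage_inter,
    lintegral_image_eq_lintegral_abs_deriv_mul hft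
      (fun x hx => (hf' x hx.2).mono Set.inter_subset_right) (hf.mono Set.inter_subset_right)]

theorem MeasureTheory.Measure.map_eq_map_iff_of_leftInvOn {α β : Type*} [MeasurableSpace α]
    [MeasurableSpace β] {μ ν : Measure α} {f : α → β} {g : β → α} {s : Set α}
    (hf : Measurable f) (hg : Measurable g)
    (hgf : Set.LeftInvOn g f s) (hμ : ∀ᵐ x ∂μ, x ∈ s) (hν : ∀ᵐ x ∂ν, x ∈ s) :
    μ.map f = ν.map f ↔ μ = ν := by
  have map_map_eq {ρ : Measure α} (hρ : ∀ᵐ x ∂ρ, x ∈ s) : (ρ.map f).map g = ρ := by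
    have hgf_ae : g ∘ f =ᵐ[ρ] id := hρ.mono fun x hx => hgf hx
    rw [Measure.map_map hg hf, Measure.map_congr hgf_ae, Measure.map_id]
  exact ⟨fun h => by rw [← map_map_eq hμ, h, map_map_eq hν], congrArg _⟩

theorem pdfMeasure_eq_restrict_withDensity {f : ℝ → ℝ} {s : Set ℝ} (hs : MeasurableSet s)
    (hf : ∀ x ∉ s, f x = 0) :
    pdfMeasure f = (volume.restrict s).withDensity fun x => ENNReal.ofReal (f x) := by
  rw [pdfMeasure, ← withDensity_indicator hs]
  congr 1
  funext x
  by_cases hx : x ∈ s <;> simp [hx, hf]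

theorem pdfMeasure_gbpPdf_eq_restrict_Ioi (a b c d : ℝ) :
    pdfMeasure (gbpPdf a b c d) =
      (volume.restrict (Set.Ioi 0)).withDensity fun x => ENNReal.ofReal (gbpPdf a b c d x) := by
  rw [pdfMeasure_eq_restrict_withDensity (f := gbpPdf a b c d) measurableSet_Ici
      fun _ hx => if_neg hx,
    Measure.restrict_congr_set Ioi_ae_eq_Ici]

theorem pdfMeasure_betaPdf_eq_restrict_Ioo (a b : ℝ) :
    pdfMeasure (betaPdf a b) =
      (volume.restrict (Set.Ioo 0 1)).withDensity fun x => ENNReal.ofReal (betaPdf a b x) :=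
  pdfMeasure_eq_restrict_withDensity measurableSet_Ioo fun _ hx => if_neg hx

theorem ae_pdfMeasure_gbpPdf_mem_Ioi (a b c d : ℝ) :
    ∀ᵐ x ∂pdfMeasure (gbpPdf a b c d), x ∈ Set.Ioi 0 := by
  rw [pdfMeasure_gbpPdf_eq_restrict_Ioi]
  exact (withDensity_absolutelyContinuous _ _).ae_le (ae_restrict_mem measurableSet_Ioi)

section DivAddConst

variable {σ2 : ℝ}

theorem measurable_div_add_const (σ2 : ℝ) : Measurable fun x : ℝ => x / (x + σ2) :=
  measurable_id.div (measurable_id.add_const σ2)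

theorem hasDerivAt_div_add_const {x : ℝ} (hx : x + σ2 ≠ 0) :
    HasDerivAt (fun x => x / (x + σ2)) (σ2 / (x + σ2) ^ 2) x :=
  ((hasDerivAt_id' x).fun_div ((hasDerivAt_id' x).add_const σ2) hx).congr_deriv (by ring)

theorem leftInvOn_div_add_const (hσ : 0 < σ2) :
    Set.LeftInvOn (fun y => σ2 * y / (1 - y)) (fun x => x / (x + σ2)) (Set.Ioi 0) := by
  intro x (hx : 0 < x)
  have : x + σ2 ≠ 0 := by positivity
  field_simp
  rw [add_sub_cancel_left, div_self hσ.ne']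

theorem image_div_add_const_Ioi (hσ : 0 < σ2) :
    (fun x => x / (x + σ2)) '' Set.Ioi 0 = Set.Ioo 0 1 := by
  ext y
  constructor
  · rintro ⟨x, hx : 0 < x, rfl⟩
    exact ⟨by positivity, (div_lt_one (by positivity)).2 (by linarith)⟩
  · rintro ⟨hy0, hy1⟩
    have : 1 - y ≠ 0 := by linarith
    refine ⟨σ2 * y / (1 - y), div_pos (mul_pos hσ hy0) (by linarith), ?_⟩
    field_simp
    ring

theorem mul_betaPdf_div_add_const_eq_gbpPdf (a b : ℝ) (hσ : 0 < σ2) {x : ℝ}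
    (hx : 0 < x) : σ2 / (x + σ2) ^ 2 * betaPdf a b (x / (x + σ2)) = gbpPdf a b 1 σ2 x := by
  obtain ⟨t, ht, rfl⟩ : ∃ t, 0 < t ∧ x = σ2 * t := ⟨x / σ2, div_pos hx hσ, by field_simp⟩
  have hy : σ2 * t / (σ2 * t + σ2) = t / (1 + t) := by field_simp; ring
  have h1y : 1 - t / (1 + t) = (1 + t)⁻¹ := by field_simp; ring
  have hJ : σ2 / (σ2 * t + σ2) ^ 2 = σ2⁻¹ * ((1 + t) ^ 2)⁻¹ := by field_simp; ring
  have hpow : (1 + t) ^ (a + b) = (1 + t) ^ 2 * (1 + t) ^ (a - 1) * (1 + t) ^ (b - 1) := by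
    rw [← rpow_natCast, ← rpow_add (by positivity), ← rpow_add (by positivity)]
    ring_nf
  rw [betaPdf, gbpPdf, hy, if_pos ⟨by positivity, (div_lt_one (by positivity)).2 (by linarith)⟩,
    if_pos (by positivity), h1y, hJ, mul_one, one_mul, rpow_one, mul_div_cancel_left₀ t hσ.ne',
    div_rpow ht.le (by positivity), inv_rpow (by positivity), rpow_neg (by positivity), hpow]
  generalize 1 + t = s
  ring

theorem map_div_add_const_pdfMeasure_gbpPdf (a b : ℝ) (hσ : 0 < σ2) :
    (pdfMeasure (gbpPdf a b 1 σ2)).map (fun x => x / (x + σ2)) = pdfMeasure (betaPdf a b) := by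
  rw [pdfMeasure_betaPdf_eq_restrict_Ioo, ← image_div_add_const_Ioi hσ,
    ← map_restrict_withDensity_abs_deriv_mul measurableSet_Ioi (measurable_div_add_const σ2)
      (fun x (hx : 0 < x) => (hasDerivAt_div_add_const (by positivity)).hasDerivWithinAt)
      (leftInvOn_div_add_const hσ).injOn,
    pdfMeasure_gbpPdf_eq_restrict_Ioi]
  refine congrArg _ (withDensity_congr_ae ((ae_restrict_iff' measurableSet_Ioi).2
    (ae_of_all _ fun x (hx : 0 < x) => ?_)))
  dsimp only
  rw [abs_of_pos (by positivity), ← ENNReal.ofReal_mul (by positivity),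
    mul_betaPdf_div_add_const_eq_gbpPdf a b hσ hx]

end DivAddConst

theorem beta_R2_iff_gbp_v_general {Ω : Type*} [MeasurableSpace Ω] (μ : Measure Ω)
    (a b σ2 : ℝ) (hσ : 0 < σ2)
    (v : Ω → ℝ) (hm : Measurable v) (hv : ∀ ω, 0 < v ω) :
    Measure.map (fun ω => v ω / (v ω + σ2)) μ = pdfMeasure (betaPdf a b) ↔
      Measure.map v μ = pdfMeasure (gbpPdf a b 1 σ2) := by
  have hv_ae : ∀ᵐ x ∂μ.map v, x ∈ Set.Ioi 0 :=
    (ae_map_iff hm.aemeasurable measurableSet_Ioi).2 (ae_of_all _ hv)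
  have hinv : Measurable fun y : ℝ => σ2 * y / (1 - y) := by fun_prop
  have hR2 : (fun ω => v ω / (v ω + σ2)) = (fun x => x / (x + σ2)) ∘ v := rfl
  rw [hR2, ← Measure.map_map (measurable_div_add_const σ2) hm,
    ← map_div_add_const_pdfMeasure_gbpPdf a b hσ]
  exact Measure.map_eq_map_iff_of_leftInvOn (measurable_div_add_const σ2) hinv
    (leftInvOn_div_add_const hσ) hv_ae (ae_pdfMeasure_gbpPdf_mem_Ioi a b 1 σ2)

/-- With R² = v / (v + σ²) for fixed σ² > 0 and a positive random variable v,
R² ~ Beta(a, b) if and only if v ~ GBP(a, b, 1, σ²). -/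
theorem beta_R2_iff_gbp_v {Ω : Type*} [MeasurableSpace Ω] (μ : Measure Ω)
    [IsProbabilityMeasure μ] (a b σ2 : ℝ)
    (ha : 0 < a) (hb : 0 < b) (hσ : 0 < σ2)
    (v : Ω → ℝ) (hm : Measurable v) (hv : ∀ ω, 0 < v ω) :
    Measure.map (fun ω => v ω / (v ω + σ2)) μ = pdfMeasure (betaPdf a b) ↔
      Measure.map v μ = pdfMeasure (gbpPdf a b 1 σ2) :=
  beta_R2_iff_gbp_v_general μ a b σ2 hσ v hm hv
end
end

section
/- Let γ ~ Gamma(b,1), U|γ ~ Gamma(a, rate γ), and independently V ~ InverseGamma(α, β⁻¹). Then W = UV has the same distribution as the hierarchical model γ ~ Gamma(b,1), W|γ ~ GBP(a, α, 1, (βγ)⁻¹). -/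
open MeasureTheory ProbabilityTheory Real Filter Finset

noncomputable section

/-!
Conditionally on `γ`, `V = 1 / X` with `X ~ Gamma(α, β⁻¹)` independent of `U ~ Gamma(a, γ)`,
so `W = U / X`. Both sides mix over the same law of `γ`, and pushing forward along
`(u, v) ↦ u * v` commutes with mixing the first factor, so it suffices to fix `γ > 0`.
The ratio `U / X` has density `w ↦ ∫ |x| f_U (w x) f_X x dx`. For Gamma factors and `w > 0`
the integrand is a constant multiple of the `Gamma(a + α, β⁻¹ + γ w)` density in `x`, and that
constant is exactly the `GBP(a, α, 1, (β γ)⁻¹)` density at `w`.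
-/

open scoped ENNReal

namespace MeasureTheory.Measure

theorem map_bind_prod {α β γ δ : Type*} [MeasurableSpace α] [MeasurableSpace β]
    [MeasurableSpace γ] [MeasurableSpace δ] (μ : Measure α) {κ : α → Measure β}
    (hκ : Measurable κ) (ν : Measure γ) [SFinite ν] {f : β × γ → δ} (hf : Measurable f) :
    ((μ.bind κ).prod ν).map f = μ.bind fun a => ((κ a).prod ν).map f := by
  have hmap : Measurable fun a => ((κ a).prod ν).map f := by
    refine measurable_of_measurable_coe _ fun s hs => ?_
    simp_rw [map_apply hf hs, prod_apply (hf hs)]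
    exact (measurable_lintegral (measurable_measure_prodMk_left (hf hs))).comp hκ
  ext s hs
  rw [map_apply hf hs, prod_apply (hf hs), bind_apply hs hmap.aemeasurable,
    lintegral_bind hκ.aemeasurable (measurable_measure_prodMk_left (hf hs)).aemeasurable]
  simp_rw [map_apply hf hs, prod_apply (hf hs)]

theorem map_mul_prod_map_inv {G : Type*} [DivInvMonoid G] [MeasurableSpace G]
    [MeasurableMul₂ G] [MeasurableInv G] (μ ν : Measure G) [SFinite μ] [SFinite ν] :
    (μ.prod (ν.map fun x => x⁻¹)).map (fun z => z.1 * z.2) =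
      (μ.prod ν).map (fun z => z.1 / z.2) := by
  conv_lhs => rw [← map_id (μ := μ)]
  rw [map_prod_map _ _ measurable_id measurable_inv,
    map_map measurable_mul (measurable_id.prodMap measurable_inv)]
  simp only [Function.comp_def, Prod.map, id, div_eq_mul_inv]

end MeasureTheory.Measure

theorem Real.lintegral_eq_ofReal_abs_mul_lintegral_comp_mul_right (G : ℝ → ℝ≥0∞) {c : ℝ}
    (hc : c ≠ 0) : ∫⁻ u, G u = ENNReal.ofReal |c| * ∫⁻ w, G (w * c) := by
  conv_lhs => rw [← Real.smul_map_volume_mul_right hc]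
  rw [lintegral_smul_measure]
  congr 1
  exact lintegral_map_equiv G (Homeomorph.mulRight₀ c hc).toMeasurableEquiv

theorem withDensity_preimage_div_const {f : ℝ → ℝ≥0∞} {c : ℝ} (hc : c ≠ 0) {s : Set ℝ}
    (hs : MeasurableSet s) :
    volume.withDensity f ((· / c) ⁻¹' s) = ∫⁻ w in s, ENNReal.ofReal |c| * f (w * c) := by
  have hpre : MeasurableSet ((· / c) ⁻¹' s) := measurable_div_const c hs
  rw [withDensity_apply _ hpre, ← lintegral_indicator hpre,
    Real.lintegral_eq_ofReal_abs_mul_lintegral_comp_mul_right _ hc, ← lintegral_indicator hs,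
    ← lintegral_const_mul' _ _ ENNReal.ofReal_ne_top]
  have hmem : ∀ w, w * c ∈ (· / c) ⁻¹' s ↔ w ∈ s := fun w => by
    rw [Set.mem_preimage, mul_div_cancel_right₀ w hc]
  congr 1 with w
  by_cases hw : w ∈ s
  · rw [Set.indicator_of_mem ((hmem w).2 hw), Set.indicator_of_mem hw]
  · rw [Set.indicator_of_notMem (mt (hmem w).1 hw), Set.indicator_of_notMem hw, mul_zero]

theorem map_div_prod_withDensity {f g : ℝ → ℝ≥0∞} (hf : Measurable f) (hg : Measurable g) :
    ((volume.withDensity f).prod (volume.withDensity g)).map (fun p => p.1 / p.2) =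
      volume.withDensity fun w => ∫⁻ x, ENNReal.ofReal |x| * f (w * x) * g x := by
  ext s hs
  have hmeas : Measurable fun p : ℝ × ℝ => p.1 / p.2 := by fun_prop
  have hdiv : MeasurableSet ((fun p : ℝ × ℝ => p.1 / p.2) ⁻¹' s) := hmeas hs
  rw [Measure.map_apply hmeas hs, Measure.prod_apply_symm hdiv,
    lintegral_withDensity_eq_lintegral_mul _ hg (measurable_measure_prodMk_right hdiv),
    withDensity_apply _ hs, lintegral_lintegral_swap (by fun_prop)]
  refine lintegral_congr_ae ((Measure.ae_ne volume 0).mono fun x hx => ?_)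
  change g x * _ = ∫⁻ w in s, ENNReal.ofReal |x| * f (w * x) * g x
  rw [lintegral_mul_const _ (by fun_prop), mul_comm, ← withDensity_preimage_div_const hx hs]
  rfl

theorem measurable_gammaPDF (a r : ℝ) : Measurable (gammaPDF a r) :=
  (measurable_gammaPDFReal a r).ennreal_ofReal

theorem pdfMeasure_gammaPdf (a r : ℝ) : pdfMeasure (gammaPdf a r) = gammaMeasure a r := by
  refine withDensity_congr_ae ((Measure.ae_ne volume 0).mono fun x hx => ?_)
  dsimp only
  rcases hx.lt_or_gt with hx | hx
  · rw [gammaPdf, if_neg hx.not_gt, gammaPDF_of_neg hx, ENNReal.ofReal_zero]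
  · rw [gammaPdf, if_pos hx, gammaPDF_of_nonneg hx.le]

instance (a r : ℝ) : SFinite (gammaMeasure a r) := by
  rw [gammaMeasure]
  infer_instance

theorem measurable_gammaMeasure (a : ℝ) : Measurable fun r => gammaMeasure a r := by
  have hpdf : Measurable (Function.uncurry fun r x => gammaPDF a r x) := by
    simp only [Function.uncurry_def, gammaPDF, gammaPDFReal]
    refine Measurable.ennreal_ofReal (Measurable.ite ?_ (by fun_prop) measurable_const)
    exact measurableSet_le measurable_const measurable_snd
  convert (Kernel.withDensity (Kernel.const ℝ volume) fun r x => gammaPDF a r x).measurable with r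
  rw [Kernel.withDensity_apply _ hpdf, Kernel.const_apply, gammaMeasure]

theorem ae_pos_gammaMeasure (a r : ℝ) : ∀ᵐ x ∂gammaMeasure a r, 0 < x := by
  rw [gammaMeasure, ae_withDensity_iff (measurable_gammaPDF a r)]
  filter_upwards [Measure.ae_ne volume 0] with x hx0 hx
  exact hx0.symm.lt_of_le (not_lt.1 fun hneg => hx (gammaPDF_of_neg hneg))

section Ratio

variable {p q r s w : ℝ}

theorem mul_gammaPDFReal_mul_gammaPDFReal (hp : 0 < p) (hq : 0 < q) (hr : 0 < r) (hs : 0 < s)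
    (hw : 0 < w) {x : ℝ} (hx : 0 < x) :
    x * gammaPDFReal p r (w * x) * gammaPDFReal q s x =
      r ^ p * s ^ q * w ^ (p - 1) * Gamma (p + q) /
          (Gamma p * Gamma q * (s + r * w) ^ (p + q)) * gammaPDFReal (p + q) (s + r * w) x := by
  have hwx : 0 < w * x := mul_pos hw hx
  have hΓ := (Gamma_pos_of_pos (add_pos hp hq)).ne'
  have ht : (s + r * w) ^ (p + q) ≠ 0 := (rpow_pos_of_pos (by positivity) _).ne'
  have hxpow : x ^ (p + q - 1) = x * x ^ (p - 1) * x ^ (q - 1) := by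
    rw [show p + q - 1 = 1 + (p - 1) + (q - 1) by ring, rpow_add hx, rpow_add hx, rpow_one]
  have hexp : exp (-((s + r * w) * x)) = exp (-(r * (w * x))) * exp (-(s * x)) := by
    rw [← exp_add]; ring_nf
  rw [gammaPDFReal, gammaPDFReal, gammaPDFReal, if_pos hwx.le, if_pos hx.le, if_pos hx.le,
    mul_rpow hw.le hx.le, hxpow, hexp]
  field_simp

theorem gbpPdf_div (hp : 0 < p) (hq : 0 < q) (hr : 0 < r) (hs : 0 < s) (hw : 0 < w) :
    gbpPdf p q 1 (s / r) w =
      r ^ p * s ^ q * w ^ (p - 1) * Gamma (p + q) /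
        (Gamma p * Gamma q * (s + r * w) ^ (p + q)) := by
  have hscale : 1 + w / (s / r) = (s + r * w) / s := by field_simp
  have hpow : ((s + r * w) / s) ^ (-(p + q)) = s ^ p * s ^ q / (s + r * w) ^ (p + q) := by
    rw [rpow_neg (by positivity), div_rpow (by positivity) hs.le, inv_div, rpow_add hs]
  rw [gbpPdf, if_pos hw.le, rpow_one, hscale, hpow, mul_one, div_div_eq_mul_div,
    div_rpow (by positivity) hs.le, mul_rpow hw.le hr.le, rpow_sub_one hr.ne',
    rpow_sub_one hs.ne', betaFn]
  have := Gamma_pos_of_pos hp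
  have := Gamma_pos_of_pos hq
  have := Gamma_pos_of_pos (add_pos hp hq)
  have : 0 < (s + r * w) ^ (p + q) := rpow_pos_of_pos (by positivity) _
  have : 0 < s ^ p := rpow_pos_of_pos hs _
  field_simp

theorem lintegral_abs_mul_gammaPDF_mul_gammaPDF (hp : 0 < p) (hq : 0 < q) (hr : 0 < r)
    (hs : 0 < s) (hw : w ≠ 0) :
    ∫⁻ x, ENNReal.ofReal |x| * gammaPDF p r (w * x) * gammaPDF q s x =
      ENNReal.ofReal (gbpPdf p q 1 (s / r) w) := by
  rcases hw.lt_or_gt with hw | hw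
  · rw [gbpPdf, if_neg hw.not_ge, ENNReal.ofReal_zero, ← lintegral_zero]
    congr 1 with x
    rcases lt_trichotomy x 0 with hx | rfl | hx
    · rw [gammaPDF_of_neg hx, mul_zero]
    · simp
    · rw [gammaPDF_of_neg (mul_neg_of_neg_of_pos hw hx), mul_zero, zero_mul]
  set C := r ^ p * s ^ q * w ^ (p - 1) * Gamma (p + q) /
    (Gamma p * Gamma q * (s + r * w) ^ (p + q))
  have hC : 0 ≤ C := by
    have := Gamma_pos_of_pos hp
    have := Gamma_pos_of_pos hq
    have := Gamma_pos_of_pos (add_pos hp hq)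
    positivity
  calc ∫⁻ x, ENNReal.ofReal |x| * gammaPDF p r (w * x) * gammaPDF q s x
      = ∫⁻ x, ENNReal.ofReal C * gammaPDF (p + q) (s + r * w) x := by
        refine lintegral_congr_ae ((Measure.ae_ne volume 0).mono fun x hx => ?_)
        dsimp only
        rcases hx.lt_or_gt with hx | hx
        · rw [gammaPDF_of_neg hx, gammaPDF_of_neg hx, mul_zero, mul_zero]
        · simp only [gammaPDF]
          rw [← ENNReal.ofReal_mul (abs_nonneg x),
            ← ENNReal.ofReal_mul (mul_nonneg (abs_nonneg x) (gammaPDFReal_nonneg hp hr _)),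
            ← ENNReal.ofReal_mul hC, abs_of_pos hx,
            mul_gammaPDFReal_mul_gammaPDFReal hp hq hr hs hw hx]
    _ = ENNReal.ofReal C := by
        rw [lintegral_const_mul' _ _ ENNReal.ofReal_ne_top,
          lintegral_gammaPDF_eq_one (add_pos hp hq) (by positivity), mul_one]
    _ = ENNReal.ofReal (gbpPdf p q 1 (s / r) w) := by rw [gbpPdf_div hp hq hr hs hw]

theorem map_div_prod_gammaMeasure (hp : 0 < p) (hq : 0 < q) (hr : 0 < r) (hs : 0 < s) :
    ((gammaMeasure p r).prod (gammaMeasure q s)).map (fun z => z.1 / z.2) =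
      pdfMeasure (gbpPdf p q 1 (s / r)) := by
  rw [gammaMeasure, gammaMeasure, map_div_prod_withDensity (measurable_gammaPDF p r)
    (measurable_gammaPDF q s), pdfMeasure]
  exact withDensity_congr_ae ((Measure.ae_ne volume 0).mono fun w hw =>
    lintegral_abs_mul_gammaPDF_mul_gammaPDF hp hq hr hs hw)

end Ratio

theorem product_eq_hierarchical_gbp_general (a b α β : ℝ)
    (ha : 0 < a) (hα : 0 < α) (hβ : 0 < β) :
    Measure.map (fun p : ℝ × ℝ => p.1 * p.2)
      (Measure.prod
        ((pdfMeasure (gammaPdf b 1)).bind fun γ => pdfMeasure (gammaPdf a γ))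
        (Measure.map (fun x => x⁻¹) (pdfMeasure (gammaPdf α β⁻¹))))
      = (pdfMeasure (gammaPdf b 1)).bind
          (fun γ => pdfMeasure (gbpPdf a α 1 ((β * γ)⁻¹))) := by
  simp only [pdfMeasure_gammaPdf]
  rw [Measure.map_bind_prod _ (measurable_gammaMeasure a) _ measurable_mul]
  refine Measure.bind_congr_right ((ae_pos_gammaMeasure b 1).mono fun γ hγ => ?_)
  dsimp only
  rw [Measure.map_mul_prod_map_inv, map_div_prod_gammaMeasure ha hα hγ (inv_pos.2 hβ),
    div_eq_mul_inv, mul_inv]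

/-- Let γ ~ Gamma(b,1), U | γ ~ Gamma(a, rate γ) (so that marginally U is the γ-mixture of
Gamma(a, γ)), and independently V ~ InverseGamma(α, β⁻¹) (the law of 1/X for
X ~ Gamma(α, rate β⁻¹)). Then W = U·V has the same distribution as the hierarchical model
γ ~ Gamma(b,1), W | γ ~ GBP(a, α, 1, (βγ)⁻¹). -/
theorem product_eq_hierarchical_gbp (a b α β : ℝ)
    (ha : 0 < a) (hb : 0 < b) (hα : 0 < α) (hβ : 0 < β) :
    Measure.map (fun p : ℝ × ℝ => p.1 * p.2)
      (Measure.prod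
        ((pdfMeasure (gammaPdf b 1)).bind fun γ => pdfMeasure (gammaPdf a γ))
        (Measure.map (fun x => x⁻¹) (pdfMeasure (gammaPdf α β⁻¹))))
      = (pdfMeasure (gammaPdf b 1)).bind
          (fun γ => pdfMeasure (gbpPdf a α 1 ((β * γ)⁻¹))) :=
  product_eq_hierarchical_gbp_general a b α β ha hα hβ
end
end
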